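/- Let C be a spherical fusion category with commutative Grothendieck ring, generated by a simple object X, with characters μ_j of the complexified Grothendieck ring, conjugacy class dimensions dim(C^j) = dim(C)/n_j, and universal grading group U(C) of order |U(C)| = |G| where G is the group of group-like characters. If for every j the quantity λ_0(μ_j, X) := dim(C^j) · μ_j([X])/dim(X) is an algebraic integer (the Isaacs property for s = 0), then dim(C)/(|U(C)| · dim(X)) is an algebraic integer. -/

import Mathlib

open scoped BigOperators

/-- A commutative fusion ring: nonnegative integer fusion coefficients on a basis
`x_0, ..., x_m` (`x_0` the unit), a duality involution, and Frobenius-Perron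
dimensions `d i > 0`. -/
structure FusionData (m : ℕ) where
  N : Fin (m + 1) → Fin (m + 1) → Fin (m + 1) → ℕ
  dual : Fin (m + 1) → Fin (m + 1)
  dual_invol : ∀ i, dual (dual i) = i
  N_comm : ∀ i j k, N i j k = N j i k
  N_assoc : ∀ i j l k, ∑ t, N i j t * N t l k = ∑ t, N j l t * N i t k
  N_one : ∀ j k, N 0 j k = if k = j then 1 else 0
  N_pair : ∀ i j, N i j 0 = if j = dual i then 1 else 0
  d : Fin (m + 1) → ℝ
  d_pos : ∀ i, 0 < d i
  d_one : d 0 = 1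
  d_mul : ∀ i j, d i * d j = ∑ k, (N i j k : ℝ) * d k
  d_dual : ∀ i, d (dual i) = d i

/-- A character of the complexified fusion ring, given by its values on the basis. -/
def IsChar {m : ℕ} (F : FusionData m) (μ : Fin (m + 1) → ℂ) : Prop :=
  μ 0 = 1 ∧
  (∀ i j, μ i * μ j = ∑ k, (F.N i j k : ℂ) * μ k) ∧
  (∀ i, μ (F.dual i) = starRingEnd ℂ (μ i)) ∧
  (∀ i, ‖μ i‖ ≤ F.d i)

/-- The dual `⋆` product: `(μ ⋆ ν)(x_k / d_k) = μ(x_k / d_k) · ν(x_k / d_k)`. -/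
noncomputable def starProd {m : ℕ} (F : FusionData m) (μ ν : Fin (m + 1) → ℂ) :
    Fin (m + 1) → ℂ :=
  fun i => μ i * ν i / (F.d i : ℂ)

/-- A group-like character: `μ ⋆ μ# = μ_0 = FPdim`, where `μ#` is the complex
conjugate character. -/
def IsGroupLike {m : ℕ} (F : FusionData m) (μ : Fin (m + 1) → ℂ) : Prop :=
  IsChar F μ ∧ ∀ i, starProd F μ (fun k => starRingEnd ℂ (μ k)) i = (F.d i : ℂ)

/-- The coefficient of the basis element `x_k` in the `n`-th power of `x_a`. -/
def powCoeff {m : ℕ} (F : FusionData m) (a : Fin (m + 1)) : ℕ → Fin (m + 1) → ℕ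
  | 0, k => if k = 0 then 1 else 0
  | n + 1, k => ∑ l, powCoeff F a n l * F.N a l k

/-!
The second orthogonality relation `∑_j |μ_j(X)|² / n_j = 1` writes `dim C / dim X` as the sum over
all characters of `λ_0(μ_j, X) · conj μ_j(X)`, each term an algebraic integer since character values
are eigenvalues of integer matrices. The group-like characters form a group under `⋆`, acting on
characters by `⋆` without changing absolute values, so the terms are constant on orbits. Since
`X` generates, a group-like character equal to `dim` at `X` is trivial, so the action is free on
the characters not vanishing at `X`, which are the only ones contributing. Hence the sum is `|G|`
times a sum of algebraic integers over orbit representatives.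
-/

open Classical in
theorem MulAction.sum_eq_card_smul_sum_orbits {G β M : Type*} [Group G] [MulAction G β]
    [Fintype β] [AddCommMonoid M] (f : β → M) (hf : ∀ (g : G) b, f (g • b) = f b)
    (hfree : ∀ b, f b ≠ 0 → ∀ g : G, g • b = b → g = 1) :
    ∑ b, f b = Nat.card G • ∑ ω : orbitRel.Quotient G β, f ω.out := by
  rw [← (selfEquivSigmaOrbits G β).symm.sum_comp, Fintype.sum_sigma, Finset.smul_sum]
  refine Finset.sum_congr rfl fun ω _ => ?_
  have hconst : ∀ x : orbit G ω.out, f x = f ω.out := by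
    rintro ⟨_, g, rfl⟩
    exact hf g _
  change ∑ x : orbit G ω.out, f x = _
  rw [Fintype.sum_congr _ _ hconst, Finset.sum_const, Finset.card_univ, ← Nat.card_eq_fintype_card]
  rcases eq_or_ne (f ω.out) 0 with h0 | h0
  · simp [h0]
  · congr 1
    refine Nat.card_range_of_injective fun g g' hgg' => ?_
    exact (inv_mul_eq_one.mp (hfree _ h0 _ (by rw [mul_smul, hgg', inv_smul_smul]))).symm

theorem Complex.eq_of_sum_mul_eq_of_norm_le {ι : Type*} [Fintype ι] {c r : ι → ℝ} {z : ι → ℂ}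
    (hc : ∀ i, 0 ≤ c i) (hz : ∀ i, ‖z i‖ ≤ r i)
    (h : ∑ i, (c i : ℂ) * z i = ∑ i, (c i : ℂ) * r i) {k : ι} (hk : c k ≠ 0) :
    z k = r k := by
  have hre : ∑ i, c i * (r i - (z i).re) = 0 := by
    have := congrArg Complex.re h
    simp only [Complex.re_sum, Complex.re_ofReal_mul, Complex.ofReal_re] at this
    simp only [mul_sub, Finset.sum_sub_distrib, this, sub_self]
  have hterm : ∀ i, 0 ≤ c i * (r i - (z i).re) := fun i =>
    mul_nonneg (hc i) (sub_nonneg.mpr ((Complex.re_le_norm _).trans (hz i)))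
  have hzk : (z k).re = r k := by
    have := (Fintype.sum_eq_zero_iff_of_nonneg hterm).mp hre
    have := (mul_eq_zero.mp (congrFun this k)).resolve_left hk
    linarith
  have hnorm : (z k).re = ‖z k‖ := le_antisymm (Complex.re_le_norm _) (hzk ▸ hz k)
  rw [Complex.eq_re_of_ofReal_le (Complex.re_eq_norm.mp hnorm), hzk]

namespace FusionData

variable {m : ℕ} (F : FusionData m)

theorem dual_injective : Function.Injective F.dual :=
  Function.LeftInverse.injective F.dual_invol

theorem sum_comp_dual {M : Type*} [AddCommMonoid M] (f : Fin (m + 1) → M) :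
    ∑ i, f (F.dual i) = ∑ i, f i :=
  Equiv.sum_comp (Function.Involutive.toPerm F.dual F.dual_invol) f

theorem N_rotate (a b c : Fin (m + 1)) : F.N a b c = F.N b (F.dual c) (F.dual a) := by
  calc F.N a b c = ∑ t, F.N a b t * F.N t (F.dual c) 0 := by
        simp [F.N_pair, F.dual_injective.eq_iff]
    _ = ∑ t, F.N b (F.dual c) t * F.N a t 0 := F.N_assoc a b (F.dual c) 0
    _ = F.N b (F.dual c) (F.dual a) := by simp [F.N_pair]

theorem N_frobenius (a b c : Fin (m + 1)) : F.N a b c = F.N a (F.dual c) (F.dual b) := by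
  rw [F.N_rotate a b c, F.N_rotate a (F.dual c) (F.dual b), F.dual_invol, F.N_comm]

theorem isChar_d : IsChar F (fun i => (F.d i : ℂ)) := by
  refine ⟨by simp [F.d_one], fun i j => ?_, fun i => by simp [F.d_dual], fun i => ?_⟩
  · simp only
    exact_mod_cast F.d_mul i j
  · simp [abs_of_pos (F.d_pos i)]

theorem d_ne_zero (i : Fin (m + 1)) : (F.d i : ℂ) ≠ 0 :=
  Complex.ofReal_ne_zero.mpr (F.d_pos i).ne'

end FusionData

namespace IsChar

variable {m : ℕ} {F : FusionData m} {ν ρ : Fin (m + 1) → ℂ}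

theorem pow_apply (hν : IsChar F ν) (a : Fin (m + 1)) (n : ℕ) :
    ν a ^ n = ∑ k, (powCoeff F a n k : ℂ) * ν k := by
  induction n with
  | zero => simp [powCoeff, hν.1]
  | succ n ih =>
    calc ν a ^ (n + 1) = ∑ l, (powCoeff F a n l : ℂ) * (ν a * ν l) := by
          rw [pow_succ, ih, Finset.sum_mul]
          exact Finset.sum_congr rfl fun l _ => by ring
      _ = ∑ k, (powCoeff F a (n + 1) k : ℂ) * ν k := by
          simp only [hν.2.1, Finset.mul_sum, powCoeff, Nat.cast_sum, Nat.cast_mul,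
            Finset.sum_mul]
          rw [Finset.sum_comm]
          exact Finset.sum_congr rfl fun k _ => Finset.sum_congr rfl fun l _ => by ring

theorem isIntegral_apply (hν : IsChar F ν) (i : Fin (m + 1)) : IsIntegral ℤ (ν i) := by
  let M : Matrix (Fin (m + 1)) (Fin (m + 1)) ℤ := Matrix.of fun l k => (F.N i l k : ℤ)
  have hν_ne : ν ≠ 0 := fun h => one_ne_zero (α := ℂ) (by simpa [h] using hν.1)
  -- `ν` is an eigenvector of the integer matrix of multiplication by `x_i`, with eigenvalue `ν i`
  have hdet : (Matrix.scalar _ (ν i) - M.map (algebraMap ℤ ℂ)).det = 0 := by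
    rw [← Matrix.exists_mulVec_eq_zero_iff]
    refine ⟨ν, hν_ne, ?_⟩
    rw [Matrix.sub_mulVec, sub_eq_zero]
    funext l
    rw [Matrix.scalar_apply, Matrix.mulVec_diagonal, hν.2.1 i l]
    simp [Matrix.mulVec, dotProduct, M]
  refine ⟨M.charpoly, M.charpoly_monic, ?_⟩
  rw [Polynomial.eval₂_eq_eval_map, ← Matrix.charpoly_map, Matrix.eval_charpoly, hdet]

theorem conj (hν : IsChar F ν) : IsChar F (fun i => starRingEnd ℂ (ν i)) := by
  obtain ⟨h0, hmul, hdual, hnorm⟩ := hν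
  refine ⟨by simp [h0], fun i j => ?_, fun i => by simp [hdual], fun i => by simpa using hnorm i⟩
  rw [← map_mul, hmul, map_sum]
  simp

theorem eq_d_of_apply_eq (hν : IsChar F ν) {a : Fin (m + 1)}
    (hgen : ∀ k, ∃ n, powCoeff F a n k ≠ 0) (ha : ν a = F.d a) :
    ν = fun i => (F.d i : ℂ) := by
  funext k
  obtain ⟨n, hn⟩ := hgen k
  refine Complex.eq_of_sum_mul_eq_of_norm_le (fun _ => Nat.cast_nonneg _) hν.2.2.2 ?_
    (Nat.cast_ne_zero.mpr hn)
  push_cast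
  rw [← hν.pow_apply, ← F.isChar_d.pow_apply, ha]

theorem sum_mul_conj_eq_zero (hν : IsChar F ν) (hρ : IsChar F ρ) (hne : ν ≠ ρ) :
    ∑ i, ν i * starRingEnd ℂ (ρ i) = 0 := by
  set B := ∑ i, ν i * ρ (F.dual i)
  -- `B` pairs `ν ⊗ ρ` with `∑ x_i ⊗ x_i*`, on whose two factors `x_k` acts alike
  -- (Frobenius reciprocity), so `B ≠ 0` would force `ν = ρ`
  have hB : ∀ k, ν k * B = ρ k * B := by
    intro k
    calc ν k * B = ∑ i, ∑ t, (F.N k i t : ℂ) * ν t * ρ (F.dual i) := by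
          simp only [B, Finset.mul_sum, ← mul_assoc, hν.2.1, Finset.sum_mul]
      _ = ∑ i, ∑ t, (F.N k (F.dual t) (F.dual i) : ℂ) * ν t * ρ (F.dual i) := by
          simp only [← F.N_frobenius]
      _ = ∑ i, ∑ t, (F.N k (F.dual t) i : ℂ) * ν t * ρ i := by
          rw [F.sum_comp_dual fun i => ∑ t, (F.N k (F.dual t) i : ℂ) * ν t * ρ i]
      _ = ∑ t, ν t * (ρ k * ρ (F.dual t)) := by
          rw [Finset.sum_comm]
          simp only [hρ.2.1, Finset.mul_sum]
          exact Finset.sum_congr rfl fun _ _ => Finset.sum_congr rfl fun _ _ => by ring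
      _ = ρ k * B := by
          simp only [B, Finset.mul_sum]
          exact Finset.sum_congr rfl fun _ _ => by ring
  obtain ⟨k, hk⟩ := Function.ne_iff.mp hne
  have hB0 : B = 0 := by
    by_contra h
    exact hk (mul_right_cancel₀ h (hB k))
  simpa [B, hρ.2.2.1] using hB0

theorem sum_normSq_pos (hν : IsChar F ν) : 0 < ∑ i, Complex.normSq (ν i) :=
  Finset.sum_pos' (fun i _ => Complex.normSq_nonneg _)
    ⟨0, Finset.mem_univ _, by simp [hν.1]⟩

end IsChar

theorem sum_normSq_apply_div_eq_one {m : ℕ} {F : FusionData m}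
    (μ : Fin (m + 1) → Fin (m + 1) → ℂ) (hchar : ∀ j, IsChar F (μ j))
    (hinj : Function.Injective μ) (a : Fin (m + 1)) :
    ∑ j, Complex.normSq (μ j a) / ∑ i, Complex.normSq (μ j i) = 1 := by
  set n : Fin (m + 1) → ℝ := fun j => ∑ i, Complex.normSq (μ j i)
  have hn : ∀ j, (n j : ℂ) ≠ 0 := fun j =>
    Complex.ofReal_ne_zero.mpr (hchar j).sum_normSq_pos.ne'
  let Φ : Matrix (Fin (m + 1)) (Fin (m + 1)) ℂ := Matrix.of fun j i => μ j i
  let Ψ : Matrix (Fin (m + 1)) (Fin (m + 1)) ℂ :=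
    Matrix.of fun i j => starRingEnd ℂ (μ j i) / n j
  -- first orthogonality says `Φ Ψ = 1`; the second is the diagonal of `Ψ Φ = 1`
  have hΦΨ : Φ * Ψ = 1 := by
    ext j k
    simp only [Φ, Ψ, Matrix.mul_apply, Matrix.of_apply, Matrix.one_apply, mul_div_assoc']
    rw [← Finset.sum_div]
    split_ifs with hjk
    · subst hjk
      rw [div_eq_one_iff_eq (hn j)]
      simp [n, Complex.mul_conj]
    · rw [(hchar j).sum_mul_conj_eq_zero (hchar k) (hinj.ne hjk), zero_div]
  have hΨΦ : (Ψ * Φ) a a = 1 := by rw [mul_eq_one_comm.mp hΦΨ, Matrix.one_apply_eq]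
  simp only [Ψ, Φ, Matrix.mul_apply, Matrix.of_apply, div_mul_eq_mul_div,
    ← Complex.normSq_eq_conj_mul_self] at hΨΦ
  exact_mod_cast hΨΦ

section GroupLike

variable {m : ℕ} {F : FusionData m} {g h ν : Fin (m + 1) → ℂ}

theorem isGroupLike_iff : IsGroupLike F g ↔ IsChar F g ∧ ∀ i, ‖g i‖ = F.d i := by
  refine and_congr_right fun _ => forall_congr' fun i => ?_
  have hd := F.d_pos i
  rw [starProd, Complex.mul_conj, ← Complex.sq_norm, div_eq_iff (F.d_ne_zero i)]
  constructor
  · intro h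
    have : ‖g i‖ ^ 2 = F.d i ^ 2 := by exact_mod_cast h.trans (sq _).symm
    exact (pow_left_inj₀ (norm_nonneg _) hd.le two_ne_zero).mp this
  · intro h
    rw [h]
    push_cast
    ring

theorem isGroupLike_d : IsGroupLike F (fun i => (F.d i : ℂ)) :=
  isGroupLike_iff.mpr ⟨F.isChar_d, fun i => by simp [abs_of_pos (F.d_pos i)]⟩

namespace IsGroupLike

theorem norm_apply (hg : IsGroupLike F g) (i : Fin (m + 1)) : ‖g i‖ = F.d i :=
  (isGroupLike_iff.mp hg).2 i

theorem mul_conj_apply (hg : IsGroupLike F g) (i : Fin (m + 1)) :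
    g i * starRingEnd ℂ (g i) = (F.d i : ℂ) ^ 2 := by
  rw [Complex.mul_conj, ← Complex.sq_norm, hg.norm_apply]
  push_cast
  rfl

theorem mul_apply_of_N_ne_zero (hg : IsGroupLike F g) {i j k : Fin (m + 1)}
    (hN : F.N i j k ≠ 0) : g i * g j * F.d k = F.d i * F.d j * g k := by
  have hd : (F.d i * F.d j : ℂ) ≠ 0 := mul_ne_zero (F.d_ne_zero i) (F.d_ne_zero j)
  have hgg : starRingEnd ℂ (g i * g j) * (g i * g j) = (F.d i * F.d j : ℂ) ^ 2 := by
    rw [mul_comm, map_mul, mul_mul_mul_comm, hg.mul_conj_apply, hg.mul_conj_apply]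
    ring
  -- the equality case of the triangle inequality in `|g i g j| ≤ ∑ N_ij^t |g t|`
  have hk : starRingEnd ℂ (g i * g j) * g k / (F.d i * F.d j) = F.d k := by
    refine Complex.eq_of_sum_mul_eq_of_norm_le (c := fun t => (F.N i j t : ℝ))
      (z := fun t => starRingEnd ℂ (g i * g j) * g t / (F.d i * F.d j)) (r := F.d)
      (fun _ => Nat.cast_nonneg _) (fun t => ?_) ?_ (Nat.cast_ne_zero.mpr hN)
    · simp [hg.norm_apply, abs_of_pos (F.d_pos i), abs_of_pos (F.d_pos j),
        (F.d_pos i).ne', (F.d_pos j).ne']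
    · push_cast
      calc ∑ t, (F.N i j t : ℂ) * (starRingEnd ℂ (g i * g j) * g t / (F.d i * F.d j))
          = starRingEnd ℂ (g i * g j) * (g i * g j) / (F.d i * F.d j) := by
            rw [hg.1.2.1, Finset.mul_sum, Finset.sum_div]
            exact Finset.sum_congr rfl fun _ _ => by ring
        _ = F.d i * F.d j := by rw [hgg, sq, mul_div_cancel_right₀ _ hd]
        _ = ∑ t, (F.N i j t : ℂ) * F.d t := by exact_mod_cast F.d_mul i j
  rw [div_eq_iff hd] at hk
  apply mul_left_cancel₀ hd
  linear_combination (-(g i * g j)) * hk + g k * hgg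

theorem isChar_starProd (hg : IsGroupLike F g) (hν : IsChar F ν) :
    IsChar F (starProd F g ν) := by
  obtain ⟨h0, hmul, hdual, hnorm⟩ := hν
  refine ⟨by simp [starProd, hg.1.1, h0, F.d_one], fun i j => ?_, fun i => ?_, fun i => ?_⟩
  · have hd : (F.d i * F.d j : ℂ) ≠ 0 := mul_ne_zero (F.d_ne_zero i) (F.d_ne_zero j)
    calc starProd F g ν i * starProd F g ν j
        = g i * g j / (F.d i * F.d j) * (ν i * ν j) := by simp only [starProd]; ring
      _ = ∑ k, (F.N i j k : ℂ) * (g i * g j / (F.d i * F.d j) * ν k) := by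
          rw [hmul, Finset.mul_sum]
          exact Finset.sum_congr rfl fun _ _ => by ring
      _ = ∑ k, (F.N i j k : ℂ) * starProd F g ν k := by
          refine Finset.sum_congr rfl fun k _ => ?_
          rcases eq_or_ne (F.N i j k) 0 with hN | hN
          · simp [hN]
          · rw [starProd, div_mul_eq_mul_div]
            congr 1
            rw [div_eq_div_iff hd (F.d_ne_zero k)]
            linear_combination ν k * hg.mul_apply_of_N_ne_zero hN
  · simp [starProd, hg.1.2.2.1, hdual, F.d_dual]
  · rw [starProd, norm_div, norm_mul, hg.norm_apply, Complex.norm_real, Real.norm_of_nonneg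
      (F.d_pos i).le, mul_div_cancel_left₀ _ (F.d_pos i).ne']
    exact hnorm i

theorem starProd (hg : IsGroupLike F g) (hh : IsGroupLike F h) :
    IsGroupLike F (starProd F g h) :=
  isGroupLike_iff.mpr ⟨hg.isChar_starProd hh.1, fun i => by
    simp [_root_.starProd, hg.norm_apply, hh.norm_apply, abs_of_pos (F.d_pos i),
      (F.d_pos i).ne']⟩

theorem conj (hg : IsGroupLike F g) : IsGroupLike F (fun i => starRingEnd ℂ (g i)) :=
  isGroupLike_iff.mpr ⟨hg.1.conj, fun i => by simp [hg.norm_apply]⟩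

end IsGroupLike

end GroupLike

namespace FusionData

variable {m : ℕ} (F : FusionData m)

abbrev Character : Type := {ν : Fin (m + 1) → ℂ // IsChar F ν}

abbrev GroupLikeChar : Type := {g : Fin (m + 1) → ℂ // IsGroupLike F g}

noncomputable def characterEquiv (μ : Fin (m + 1) → Fin (m + 1) → ℂ)
    (hchar : ∀ j, IsChar F (μ j)) (hinj : Function.Injective μ)
    (hall : ∀ ν, IsChar F ν → ∃ j, μ j = ν) : Fin (m + 1) ≃ F.Character :=
  Equiv.ofBijective (fun j => ⟨μ j, hchar j⟩)
    ⟨fun _ _ h => hinj (congrArg Subtype.val h),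
      fun ν => (hall ν.1 ν.2).imp fun _ h => Subtype.ext h⟩

@[simp]
theorem characterEquiv_apply_coe (μ : Fin (m + 1) → Fin (m + 1) → ℂ)
    (hchar : ∀ j, IsChar F (μ j)) (hinj : Function.Injective μ)
    (hall : ∀ ν, IsChar F ν → ∃ j, μ j = ν) (j : Fin (m + 1)) :
    (F.characterEquiv μ hchar hinj hall j).1 = μ j :=
  rfl

namespace GroupLikeChar

variable {F}

theorem ext {g h : F.GroupLikeChar} (hgh : ∀ i, g.1 i = h.1 i) : g = h :=
  Subtype.ext (funext hgh)

noncomputable instance : CommGroup F.GroupLikeChar where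
  mul g h := ⟨starProd F g.1 h.1, g.2.starProd h.2⟩
  one := ⟨fun i => F.d i, isGroupLike_d⟩
  inv g := ⟨fun i => starRingEnd ℂ (g.1 i), g.2.conj⟩
  mul_assoc g h k := ext fun i => by
    change g.1 i * h.1 i / F.d i * k.1 i / F.d i = g.1 i * (h.1 i * k.1 i / F.d i) / F.d i
    ring
  one_mul g := ext fun i => mul_div_cancel_left₀ (g.1 i) (F.d_ne_zero i)
  mul_one g := ext fun i => mul_div_cancel_right₀ (g.1 i) (F.d_ne_zero i)
  inv_mul_cancel g := ext fun i => by
    change starRingEnd ℂ (g.1 i) * g.1 i / F.d i = F.d i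
    rw [mul_comm, g.2.mul_conj_apply, sq, mul_div_cancel_right₀ _ (F.d_ne_zero i)]
  mul_comm g h := ext fun i => by
    change g.1 i * h.1 i / F.d i = h.1 i * g.1 i / F.d i
    ring

noncomputable instance : MulAction F.GroupLikeChar F.Character where
  smul g ν := ⟨starProd F g.1 ν.1, g.2.isChar_starProd ν.2⟩
  one_smul ν := Subtype.ext (funext fun i => mul_div_cancel_left₀ (ν.1 i) (F.d_ne_zero i))
  mul_smul g h ν := Subtype.ext (funext fun i => by
    change g.1 i * h.1 i / F.d i * ν.1 i / F.d i = g.1 i * (h.1 i * ν.1 i / F.d i) / F.d i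
    ring)

theorem smul_apply (g : F.GroupLikeChar) (ν : F.Character) (i : Fin (m + 1)) :
    (g • ν).1 i = g.1 i * ν.1 i / F.d i :=
  rfl

theorem normSq_smul_apply (g : F.GroupLikeChar) (ν : F.Character) (i : Fin (m + 1)) :
    Complex.normSq ((g • ν).1 i) = Complex.normSq (ν.1 i) := by
  rw [smul_apply, Complex.normSq_div, Complex.normSq_mul, Complex.normSq_ofReal,
    Complex.normSq_eq_norm_sq, g.2.norm_apply]
  field_simp [(F.d_pos i).ne']

theorem eq_one_of_smul_eq {a : Fin (m + 1)} (hgen : ∀ k, ∃ n, powCoeff F a n k ≠ 0)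
    {g : F.GroupLikeChar} {ν : F.Character} (hgν : g • ν = ν) (ha : ν.1 a ≠ 0) : g = 1 := by
  have hga : g.1 a = F.d a := by
    have := congrArg (fun ν : F.Character => ν.1 a) hgν
    simp only [smul_apply, div_eq_iff (F.d_ne_zero a)] at this
    exact mul_right_cancel₀ ha (this.trans (mul_comm _ _))
  exact Subtype.ext (g.2.1.eq_d_of_apply_eq hgen hga)

end GroupLikeChar

end FusionData

/-- `λ_0(ν, X) · conj ν(X)`, written through `|ν(X)|²` so that it is visibly invariant
under `⋆`. -/
noncomputable def isaacsTerm {m : ℕ} (dimC dimX : ℂ) (a : Fin (m + 1))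
    (ν : Fin (m + 1) → ℂ) : ℂ :=
  dimC / dimX * (Complex.normSq (ν a) / ∑ i, Complex.normSq (ν i) : ℝ)

theorem isaacsTerm_eq {m : ℕ} (dimC dimX : ℂ) (a : Fin (m + 1)) (ν : Fin (m + 1) → ℂ) :
    isaacsTerm dimC dimX a ν =
      dimC / ((∑ i, Complex.normSq (ν i) : ℝ) : ℂ) * ν a / dimX * starRingEnd ℂ (ν a) := by
  rw [isaacsTerm, Complex.ofReal_div, ← Complex.mul_conj]
  ring

theorem isaacsTerm_smul {m : ℕ} {F : FusionData m} (dimC dimX : ℂ) (a : Fin (m + 1))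
    (g : F.GroupLikeChar) (ν : F.Character) :
    isaacsTerm dimC dimX a (g • ν).1 = isaacsTerm dimC dimX a ν.1 := by
  simp only [isaacsTerm, FusionData.GroupLikeChar.normSq_smul_apply]

theorem isaacs_zero_divisibility_general {m : ℕ} (F : FusionData m)
    (a : Fin (m + 1)) (hgen : ∀ k, ∃ n, powCoeff F a n k ≠ 0)
    (μ : Fin (m + 1) → Fin (m + 1) → ℂ)
    (hchar : ∀ j, IsChar F (μ j)) (hinj : Function.Injective μ)
    (hall : ∀ ν, IsChar F ν → ∃ j, μ j = ν)
    (dims : Fin (m + 1) → ℂ)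
    (hIsaacs : ∀ j, IsIntegral ℤ
      ((∑ i, dims i ^ 2) / ((∑ i, Complex.normSq (μ j i) : ℝ) : ℂ) * μ j a / dims a)) :
    IsIntegral ℤ ((∑ i, dims i ^ 2) /
      ((Nat.card {j : Fin (m + 1) // IsGroupLike F (μ j)} : ℂ) * dims a)) := by
  classical
  set D := ∑ i, dims i ^ 2
  let e := F.characterEquiv μ hchar hinj hall
  let : Fintype F.Character := Fintype.ofEquiv _ e
  let eG : {j // IsGroupLike F (μ j)} ≃ F.GroupLikeChar :=
    (e.subtypeEquiv fun _ => Iff.rfl).trans (Equiv.subtypeSubtypeEquivSubtype fun hg => hg.1)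
  have : Finite F.GroupLikeChar := Finite.of_equiv _ eG
  let t : F.Character → ℂ := fun ν => isaacsTerm D (dims a) a ν.1
  have ht_int : ∀ j, IsIntegral ℤ (t (e j)) := fun j => by
    rw [show t (e j) = isaacsTerm D (dims a) a (μ j) from rfl, isaacsTerm_eq]
    exact (hIsaacs j).mul ((hchar j).conj.isIntegral_apply a)
  have ht_sum : ∑ ν, t ν = D / dims a := by
    rw [← e.sum_comp]
    simp only [t, e, FusionData.characterEquiv_apply_coe, isaacsTerm, ← Finset.mul_sum,
      ← Complex.ofReal_sum, sum_normSq_apply_div_eq_one μ hchar hinj a, Complex.ofReal_one,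
      mul_one]
  have ht_orbits := MulAction.sum_eq_card_smul_sum_orbits t (isaacsTerm_smul D (dims a) a)
    fun ν hν g hg => FusionData.GroupLikeChar.eq_one_of_smul_eq hgen hg fun ha =>
      hν (by simp [t, isaacsTerm, ha])
  have hG : (Nat.card F.GroupLikeChar : ℂ) ≠ 0 := Nat.cast_ne_zero.mpr Nat.card_pos.ne'
  rw [Nat.card_congr eG, mul_comm, ← div_div, ← ht_sum, ht_orbits, nsmul_eq_mul,
    mul_div_cancel_left₀ _ hG]
  exact IsIntegral.sum _ fun ω _ => e.apply_symm_apply ω.out ▸ ht_int _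

/-- A spherical fusion category with commutative Grothendieck ring, generated
by a simple object `X = x_a`, modelled by its Grothendieck ring `F` together
with the quantum dimension character `dims` (so `dim C = ∑ dims(x_i)²`,
`dim C^j = dim C / n_j`, and `|U(C)| = |G|`, the number of group-like
characters).  If each `λ_0(μ_j, X) = dim(C^j)·μ_j([X])/dim(X)` is an algebraic
integer (the Isaacs property for `s = 0`), then `dim C/(|U(C)|·dim X)` is an
algebraic integer. -/
theorem isaacs_zero_divisibility {m : ℕ} (F : FusionData m)
    (a : Fin (m + 1)) (hgen : ∀ k, ∃ n, powCoeff F a n k ≠ 0)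
    (μ : Fin (m + 1) → Fin (m + 1) → ℂ)
    (hchar : ∀ j, IsChar F (μ j)) (hinj : Function.Injective μ)
    (hall : ∀ ν, IsChar F ν → ∃ j, μ j = ν)
    (h0 : μ 0 = fun i => (F.d i : ℂ))
    (dims : Fin (m + 1) → ℂ) (hd0 : dims 0 = 1)
    (hdmul : ∀ i j, dims i * dims j = ∑ k, (F.N i j k : ℂ) * dims k)
    (hddual : ∀ i, dims (F.dual i) = dims i) (hda : dims a ≠ 0)
    (hIsaacs : ∀ j, IsIntegral ℤ
      ((∑ i, dims i ^ 2) / ((∑ i, Complex.normSq (μ j i) : ℝ) : ℂ) * μ j a / dims a)) :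
    IsIntegral ℤ ((∑ i, dims i ^ 2) /
      ((Nat.card {j : Fin (m + 1) // IsGroupLike F (μ j)} : ℂ) * dims a)) :=
  isaacs_zero_divisibility_general F a hgen μ hchar hinj hall dims hIsaacs
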